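/- arXiv:2410.12008 — 3 statements merged into one kernel-verified Lean document; each statement's English description precedes it below -/
import Mathlib

section
/- Fix an integer r ≥ 0 and real numbers A > 0 and α₀ > 0. Let (f_n)_{n≥1} be a sequence of monic polynomials in ℝ[X] such that every root of every f_n is real and lies in the interval [−A, A], and write d_n = deg f_n. Assume d_n → ∞ as n → ∞, that p_1(f_n) = o(d_n^{1/3}), that p_3(f_n) = o(d_n), and that p_2(f_n) ≥ α₀²·d_n for all n. Then c_{2r}(f_n) = ((−1)^r/(2r)!!)·(p_2(f_n))^r + o(d_n^{r−1/3}) as n → ∞. -/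
open Polynomial Filter Asymptotics

open Finset in

/-- Newton's identity for multisets of reals. -/
lemma newton_multiset (s : Multiset ℝ) (k : ℕ) :
    (k : ℝ) * s.esymm k =
    (-1) ^ (k + 1) * ∑ a ∈ (Finset.HasAntidiagonal.antidiagonal k).filter (fun a => a.1 < k),
      (-1 : ℝ) ^ a.1 * s.esymm a.1 * (s.map (fun x => x ^ a.2)).sum := by
  classical
  obtain ⟨l, rfl⟩ : ∃ l : List ℝ, (l : Multiset ℝ) = s := ⟨s.toList, s.coe_toList⟩
  have hs : (Finset.univ.val.map l.get : Multiset ℝ) = (l : Multiset ℝ) := by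
    rw [Fin.univ_val_map, List.ofFn_get]
  have hps : ∀ j : ℕ, (∑ i : Fin l.length, l.get i ^ j)
      = ((l : Multiset ℝ).map (fun x => x ^ j)).sum := by
    intro j
    rw [← hs, Multiset.map_map, Finset.sum]
    rfl
  have key := congrArg (MvPolynomial.aeval l.get) (MvPolynomial.mul_esymm_eq_sum (Fin l.length) ℝ k)
  simp only [map_mul, map_sum, map_pow, map_natCast, map_neg, map_one,
    MvPolynomial.aeval_esymm_eq_multiset_esymm, MvPolynomial.psum, MvPolynomial.aeval_X] at key
  rw [hs] at key
  rw [key]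
  congr 1
  refine Finset.sum_congr rfl (fun a _ => ?_)
  rw [hps]

noncomputable def Psum (f : ℕ → Polynomial ℝ) (j n : ℕ) : ℝ :=
  ((f n).roots.map (fun x => x ^ j)).sum

noncomputable def Mterm (f : ℕ → Polynomial ℝ) (k n : ℕ) : ℝ :=
  if Even k then ((-1 : ℝ) ^ (k / 2) / (Nat.doubleFactorial k : ℝ)) * (Psum f 2 n) ^ (k / 2)
  else 0

noncomputable def gexp (k : ℕ) : ℝ :=
  if Even k then (k : ℝ) / 2 - 1 / 3 else (k : ℝ) / 2 - 1 / 6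

lemma gexp_le (k : ℕ) : gexp k ≤ (k : ℝ) / 2 - 1 / 6 := by
  unfold gexp; split <;> linarith

lemma gexp_ge (k : ℕ) : (k : ℝ) / 2 - 1 / 3 ≤ gexp k := by
  unfold gexp; split <;> linarith

lemma gexp_add (i j : ℕ) (hj : 1 ≤ j) :
    gexp i + (if j = 1 then (1 : ℝ) / 3 else 1) ≤ gexp (i + j) := by
  rcases eq_or_ne j 1 with rfl | h1
  · rw [if_pos rfl]
    rcases Nat.even_or_odd i with hi | hi
    · rw [gexp, if_pos hi, gexp, if_neg (by simp [Nat.even_add_one, hi])]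
      push_cast; linarith
    · have hi' : ¬ Even i := Nat.not_even_iff_odd.mpr hi
      rw [gexp, if_neg hi', gexp, if_pos (by simp [Nat.even_add_one, hi'])]
      push_cast; linarith
  · rw [if_neg h1]
    rcases eq_or_ne j 2 with rfl | h2
    · rcases Nat.even_or_odd i with hi | hi
      · rw [gexp, if_pos hi, gexp, if_pos (by simp [Nat.even_add, hi])]
        push_cast; linarith
      · have hi' : ¬ Even i := Nat.not_even_iff_odd.mpr hi
        rw [gexp, if_neg hi', gexp, if_neg (by simp [Nat.even_add, hi'])]
        push_cast; linarith
    · have hj3 : 3 ≤ j := by omega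
      have h1' := gexp_le i
      have h2' := gexp_ge (i + j)
      have : (3 : ℝ) ≤ (j : ℝ) := by exact_mod_cast hj3
      push_cast at h2'
      linarith

lemma halfcast_le (i : ℕ) : ((i / 2 : ℕ) : ℝ) ≤ (i : ℝ) / 2 := by
  have h := Nat.div_mul_le_self i 2
  have : ((i / 2 * 2 : ℕ) : ℝ) ≤ (i : ℝ) := by exact_mod_cast h
  push_cast at this
  linarith

lemma ineq1 (i : ℕ) : ((i / 2 : ℕ) : ℝ) + 1 / 3 ≤ gexp (i + 1) := by
  rcases Nat.even_or_odd i with hi | hi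
  · obtain ⟨t, rfl⟩ := hi
    have hd : (t + t) / 2 = t := by omega
    rw [hd, gexp, if_neg (by simp [Nat.even_add_one])]
    push_cast; linarith
  · obtain ⟨t, rfl⟩ := hi
    have hd : (2 * t + 1) / 2 = t := by omega
    rw [hd, gexp, if_pos (by refine ⟨t + 1, by ring⟩)]
    push_cast; linarith

lemma ineq3 (i : ℕ) : ((i / 2 : ℕ) : ℝ) + 1 ≤ gexp (i + 3) := by
  have h1 := halfcast_le i
  have h2 := gexp_ge (i + 3)
  push_cast at h2
  linarith

lemma ineq4 (i j : ℕ) (hj : 4 ≤ j) : ((i / 2 : ℕ) : ℝ) + 1 < gexp (i + j) := by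
  have h1 := halfcast_le i
  have h2 := gexp_ge (i + j)
  have h3 : (4 : ℝ) ≤ (j : ℝ) := by exact_mod_cast hj
  push_cast at h2
  linarith

lemma kMk (f : ℕ → Polynomial ℝ) (m n : ℕ) :
    ((m + 2 : ℕ) : ℝ) * Mterm f (m + 2) n
      = (-1 : ℝ) ^ ((m + 2) + 1 + m) * (Mterm f m n * Psum f 2 n) := by
  have hsign : (-1 : ℝ) ^ ((m + 2) + 1 + m) = -1 := Odd.neg_one_pow ⟨m + 1, by ring⟩
  rw [hsign]
  rcases Nat.even_or_odd m with hm | hm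
  · have he2 : Even (m + 2) := by simpa [Nat.even_add] using hm
    obtain ⟨t, rfl⟩ := hm
    have hd1 : (t + t + 2) / 2 = t + 1 := by omega
    have hd2 : (t + t) / 2 = t := by omega
    have hdf : Nat.doubleFactorial (t + t + 2) = (t + t + 2) * Nat.doubleFactorial (t + t) :=
      Nat.doubleFactorial_add_two _
    rw [Mterm, if_pos he2, Mterm, if_pos ⟨t, rfl⟩, hd1, hd2, hdf]
    have hne1 : ((t + t + 2 : ℕ) : ℝ) ≠ 0 := by positivity
    have hne2 : ((Nat.doubleFactorial (t + t) : ℕ) : ℝ) ≠ 0 := by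
      exact_mod_cast (Nat.doubleFactorial_pos _).ne'
    push_cast
    field_simp
    ring
  · have ho2 : ¬ Even (m + 2) := by
      simpa [Nat.even_add] using (Nat.not_even_iff_odd.mpr hm : ¬ Even m)
    rw [Mterm, if_neg ho2, Mterm, if_neg (Nat.not_even_iff_odd.mpr hm)]
    ring

section Asymp

variable {d : ℕ → ℝ}

lemma rpow_isBigO (hd : Tendsto d atTop atTop) {a b : ℝ} (h : a ≤ b) :
    (fun n => d n ^ a) =O[atTop] fun n => d n ^ b := by
  refine IsBigO.of_bound 1 ?_
  filter_upwards [hd.eventually_ge_atTop 1] with n hn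
  have h0 : (0 : ℝ) ≤ d n := by linarith
  rw [one_mul, Real.norm_eq_abs, Real.norm_eq_abs, abs_of_nonneg (Real.rpow_nonneg h0 _),
    abs_of_nonneg (Real.rpow_nonneg h0 _)]
  exact Real.rpow_le_rpow_of_exponent_le hn h

lemma rpow_ev_add (hd : Tendsto d atTop atTop) (a b : ℝ) :
    (fun n => d n ^ a * d n ^ b) =ᶠ[atTop] fun n => d n ^ (a + b) := by
  filter_upwards [hd.eventually_gt_atTop 0] with n hn
  rw [Real.rpow_add hn]

lemma rpow_isLittleO (hd : Tendsto d atTop atTop) {a b : ℝ} (h : a < b) :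
    (fun n => d n ^ a) =o[atTop] fun n => d n ^ b := by
  have h0 : Tendsto (fun n => d n ^ (a - b)) atTop (nhds 0) := by
    have := (tendsto_rpow_neg_atTop (by linarith : (0 : ℝ) < b - a)).comp hd
    simpa [neg_sub, Function.comp_def] using this
  have h1 : (fun n => d n ^ (a - b)) =o[atTop] (fun _ => (1 : ℝ)) :=
    (isLittleO_one_iff ℝ).mpr h0
  have h2 := h1.mul_isBigO (isBigO_refl (fun n => d n ^ b) atTop)
  refine IsLittleO.congr' h2 ?_ (by simp)
  filter_upwards [hd.eventually_gt_atTop 0] with n hn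
  rw [← Real.rpow_add hn, sub_add_cancel]

lemma o_mul_O (hd : Tendsto d atTop atTop) {u v : ℕ → ℝ} {a b c : ℝ}
    (hu : u =o[atTop] fun n => d n ^ a) (hv : v =O[atTop] fun n => d n ^ b)
    (h : a + b ≤ c) : (fun n => u n * v n) =o[atTop] fun n => d n ^ c :=
  (hu.mul_isBigO hv).trans_isBigO (((rpow_ev_add hd a b).isBigO).trans (rpow_isBigO hd h))

lemma O_mul_o (hd : Tendsto d atTop atTop) {u v : ℕ → ℝ} {a b c : ℝ}
    (hu : u =O[atTop] fun n => d n ^ a) (hv : v =o[atTop] fun n => d n ^ b)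
    (h : a + b ≤ c) : (fun n => u n * v n) =o[atTop] fun n => d n ^ c :=
  (hu.mul_isLittleO hv).trans_isBigO (((rpow_ev_add hd a b).isBigO).trans (rpow_isBigO hd h))

lemma O_mul_O_lt (hd : Tendsto d atTop atTop) {u v : ℕ → ℝ} {a b c : ℝ}
    (hu : u =O[atTop] fun n => d n ^ a) (hv : v =O[atTop] fun n => d n ^ b)
    (h : a + b < c) : (fun n => u n * v n) =o[atTop] fun n => d n ^ c :=
  (hu.mul hv).trans_isLittleO ((rpow_ev_add hd a b).trans_isLittleO (rpow_isLittleO hd h))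

end Asymp

lemma err_littleO (A : ℝ) (hA : 0 < A) (f : ℕ → Polynomial ℝ)
    (hsplit : ∀ n, Multiset.card (f n).roots = (f n).natDegree)
    (hroots : ∀ n, ∀ x ∈ (f n).roots, x ∈ Set.Icc (-A) A)
    (hdeg : Tendsto (fun n => (f n).natDegree) atTop atTop)
    (hp1 : (fun n => ((f n).roots.map (fun x => x ^ 1)).sum) =o[atTop]
      fun n => ((f n).natDegree : ℝ) ^ ((1 : ℝ) / 3))
    (hp3 : (fun n => ((f n).roots.map (fun x => x ^ 3)).sum) =o[atTop]
      fun n => ((f n).natDegree : ℝ)) :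
    ∀ k : ℕ, (fun n => (f n).roots.esymm k - Mterm f k n) =o[atTop]
      fun n => ((f n).natDegree : ℝ) ^ gexp k := by
  have hd : Tendsto (fun n => ((f n).natDegree : ℝ)) atTop atTop :=
    tendsto_natCast_atTop_atTop.comp hdeg
  set d : ℕ → ℝ := fun n => ((f n).natDegree : ℝ) with hdd
  have hP : ∀ j : ℕ, (fun n => Psum f j n) =O[atTop] fun n => d n ^ (1 : ℝ) := by
    intro j
    refine IsBigO.of_bound (A ^ j) (Eventually.of_forall fun n => ?_)
    have habs : |Psum f j n| ≤ ((((f n).roots.map (fun x => x ^ j)).map abs)).sum :=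
      Multiset.abs_sum_le_sum_abs
    have hsum : ((((f n).roots.map (fun x => x ^ j)).map abs)).sum ≤
        (Multiset.card ((((f n).roots.map (fun x => x ^ j)).map abs))) • (A ^ j) := by
      refine Multiset.sum_le_card_nsmul _ _ ?_
      intro x hx
      simp only [Multiset.mem_map] at hx
      obtain ⟨y, ⟨z, hz, rfl⟩, rfl⟩ := hx
      rw [abs_pow]
      refine pow_le_pow_left₀ (abs_nonneg _) ?_ j
      have h := hroots n z hz
      rw [abs_le]; exact ⟨h.1, h.2⟩
    have hcard : Multiset.card ((((f n).roots.map (fun x => x ^ j)).map abs))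
        = (f n).natDegree := by
      rw [Multiset.card_map, Multiset.card_map, hsplit]
    rw [hcard, nsmul_eq_mul] at hsum
    have hd0 : (0 : ℝ) ≤ d n := Nat.cast_nonneg _
    rw [Real.norm_eq_abs, Real.norm_eq_abs, abs_of_nonneg (by positivity : (0:ℝ) ≤ d n ^ (1:ℝ)),
      Real.rpow_one]
    calc |Psum f j n| ≤ ((f n).natDegree : ℝ) * A ^ j := habs.trans hsum
    _ = A ^ j * d n := by rw [mul_comm]
  have hP1 : (fun n => Psum f 1 n) =o[atTop] fun n => d n ^ ((1 : ℝ) / 3) := hp1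
  have hP3 : (fun n => Psum f 3 n) =o[atTop] fun n => d n ^ (1 : ℝ) := by
    have he : (fun n => d n ^ (1 : ℝ)) = fun n => d n := funext fun n => Real.rpow_one _
    rw [he]; exact hp3
  have hM : ∀ i : ℕ, (fun n => Mterm f i n) =O[atTop] fun n => d n ^ ((i / 2 : ℕ) : ℝ) := by
    intro i
    by_cases hi : Even i
    · have h2 := (hP 2).pow (i / 2)
      have he : (fun n => (d n ^ (1 : ℝ)) ^ (i / 2)) = fun n => d n ^ ((i / 2 : ℕ) : ℝ) := by
        funext n; rw [Real.rpow_one, Real.rpow_natCast]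
      rw [he] at h2
      have h3 := h2.const_mul_left ((-1 : ℝ) ^ (i / 2) / (Nat.doubleFactorial i : ℝ))
      have he2 : (fun n => Mterm f i n)
          = fun n => ((-1 : ℝ) ^ (i / 2) / (Nat.doubleFactorial i : ℝ)) * (Psum f 2 n) ^ (i / 2) :=
        funext fun n => by rw [Mterm, if_pos hi]
      rw [he2]; exact h3
    · have he : (fun n => Mterm f i n) = fun _ => (0 : ℝ) := funext fun n => by
        rw [Mterm, if_neg hi]
      rw [he]; exact isLittleO_zero _ _ |>.isBigO
  intro k
  induction k using Nat.strong_induction_on with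
  | _ k IH =>
  match k, IH with
  | 0, _ =>
    have he : (fun n => (f n).roots.esymm 0 - Mterm f 0 n) = fun _ => (0 : ℝ) := by
      funext n
      rw [Mterm, if_pos (Even.zero)]
      simp [Multiset.esymm]
    rw [he]; exact isLittleO_zero _ _
  | 1, _ =>
    have he : (fun n => (f n).roots.esymm 1 - Mterm f 1 n) = fun n => Psum f 1 n := by
      funext n
      rw [Mterm, if_neg (by decide), Multiset.esymm, Multiset.powersetCard_one]
      simp [Multiset.map_map, Psum]
    have hg : gexp 1 = (1 : ℝ) / 3 := by
      rw [gexp, if_neg (by decide)]; norm_num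
    rw [he, hg]; exact hP1
  | (k + 2), IH =>
    have h0 : ((k + 2 : ℕ) : ℝ) ≠ 0 := by positivity
    have hsingle : ∀ n, (∑ a ∈ (Finset.HasAntidiagonal.antidiagonal (k + 2)).filter (fun a => a.1 < k + 2),
        (-1 : ℝ) ^ ((k + 2) + 1 + a.1) * (Mterm f a.1 n * (if a.2 = 2 then Psum f a.2 n else 0)))
        = ((k + 2 : ℕ) : ℝ) * Mterm f (k + 2) n := by
      intro n
      have hmemS : ((k, 2) : ℕ × ℕ) ∈ (Finset.HasAntidiagonal.antidiagonal (k + 2)).filter (fun a => a.1 < k + 2) := by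
        simp only [Finset.mem_filter, Finset.HasAntidiagonal.mem_antidiagonal]
        exact ⟨trivial, by omega⟩
      rw [Finset.sum_eq_single ((k, 2) : ℕ × ℕ)]
      · rw [if_pos rfl]; exact (kMk f k n).symm
      · intro b hb hbne
        simp only [Finset.mem_filter, Finset.HasAntidiagonal.mem_antidiagonal] at hb
        rcases eq_or_ne b.2 2 with h2 | h2
        · exact absurd (Prod.ext (show b.1 = k by omega) (show b.2 = 2 from h2)) hbne
        · rw [if_neg h2, mul_zero, mul_zero]
      · intro hmem
        exact absurd hmemS hmem
    have hid : ∀ n, (f n).roots.esymm (k + 2) - Mterm f (k + 2) n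
        = ((k + 2 : ℕ) : ℝ)⁻¹ * ∑ a ∈ (Finset.HasAntidiagonal.antidiagonal (k + 2)).filter (fun a => a.1 < k + 2),
          (-1 : ℝ) ^ ((k + 2) + 1 + a.1) * (((f n).roots.esymm a.1 - Mterm f a.1 n) * Psum f a.2 n
            + Mterm f a.1 n * (if a.2 = 2 then 0 else Psum f a.2 n)) := by
      intro n
      have hN := newton_multiset (f n).roots (k + 2)
      have hsplit' : ∀ a ∈ (Finset.HasAntidiagonal.antidiagonal (k + 2)).filter (fun a => a.1 < k + 2),
          (-1 : ℝ) ^ ((k + 2) + 1 + a.1) * (((f n).roots.esymm a.1 - Mterm f a.1 n) * Psum f a.2 n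
            + Mterm f a.1 n * (if a.2 = 2 then 0 else Psum f a.2 n))
          = (-1 : ℝ) ^ ((k + 2) + 1) * ((-1 : ℝ) ^ a.1 * (f n).roots.esymm a.1 *
              ((f n).roots.map (fun x => x ^ a.2)).sum)
            - (-1 : ℝ) ^ ((k + 2) + 1 + a.1) *
              (Mterm f a.1 n * (if a.2 = 2 then Psum f a.2 n else 0)) := by
        intro a _
        have hPs : Psum f a.2 n = ((f n).roots.map (fun x => x ^ a.2)).sum := rfl
        rw [← hPs]
        split_ifs <;> ring
      rw [Finset.sum_congr rfl hsplit', Finset.sum_sub_distrib, ← Finset.mul_sum, ← hN,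
        hsingle n]
      push_cast
      field_simp
    have hfun : (fun n => (f n).roots.esymm (k + 2) - Mterm f (k + 2) n)
        = fun n => ((k + 2 : ℕ) : ℝ)⁻¹ *
          ∑ a ∈ (Finset.HasAntidiagonal.antidiagonal (k + 2)).filter (fun a => a.1 < k + 2),
          (-1 : ℝ) ^ ((k + 2) + 1 + a.1) * (((f n).roots.esymm a.1 - Mterm f a.1 n) * Psum f a.2 n
            + Mterm f a.1 n * (if a.2 = 2 then 0 else Psum f a.2 n)) := funext fun n => hid n
    rw [hfun]
    refine IsLittleO.const_mul_left ?_ _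
    refine IsLittleO.fun_sum ?_
    intro a ha
    simp only [Finset.mem_filter, Finset.HasAntidiagonal.mem_antidiagonal] at ha
    obtain ⟨hsa, hlt⟩ := ha
    refine IsLittleO.const_mul_left ?_ _
    refine IsLittleO.add ?_ ?_
    · -- (esymm a.1 - Mterm a.1) * Psum a.2
      have hIH := IH a.1 (by omega)
      by_cases hj : a.2 = 1
      · rw [hj]
        refine o_mul_O hd hIH hP1.isBigO ?_
        have h' := gexp_add a.1 1 le_rfl
        rw [if_pos rfl] at h'
        rwa [show a.1 + 1 = k + 2 by omega] at h'
      · refine o_mul_O hd hIH (hP a.2) ?_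
        have h' := gexp_add a.1 a.2 (by omega)
        rw [if_neg hj] at h'
        rwa [hsa] at h'
    · -- Mterm a.1 * ite
      by_cases hj2 : a.2 = 2
      · have he : (fun n => Mterm f a.1 n * (if a.2 = 2 then 0 else Psum f a.2 n))
            = fun _ => (0 : ℝ) := funext fun n => by rw [if_pos hj2, mul_zero]
        rw [he]; exact isLittleO_zero _ _
      · simp only [if_neg hj2]
        by_cases hj1 : a.2 = 1
        · rw [hj1]
          refine O_mul_o hd (hM a.1) hP1 ?_
          have h' := ineq1 a.1
          rwa [show a.1 + 1 = k + 2 by omega] at h'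
        · by_cases hj3 : a.2 = 3
          · rw [hj3]
            refine O_mul_o hd (hM a.1) hP3 ?_
            have h' := ineq3 a.1
            rwa [show a.1 + 3 = k + 2 by omega] at h'
          · refine (O_mul_O_lt hd (hM a.1) (hP a.2) ?_)
            have h' := ineq4 a.1 a.2 (by omega)
            rwa [hsa] at h'


/-- For a sequence of monic real polynomials `f n`, all of whose roots are real
(`(f n).roots.card = (f n).natDegree`) and lie in `[-A, A]`, with degrees `dₙ → ∞`,
`p₁(fₙ) = o(dₙ^{1/3})`, `p₃(fₙ) = o(dₙ)`, and `p₂(fₙ) ≥ α₀² dₙ`, the coefficient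
`c_{2r}(fₙ)` (the coefficient of `x^{dₙ - 2r}`) satisfies
`c_{2r}(fₙ) = ((-1)^r / (2r)!!) ⬝ p₂(fₙ)^r + o(dₙ^{r - 1/3})`. -/
theorem coeff_two_r_asymptotic (r : ℕ) (A α₀ : ℝ) (hA : 0 < A) (hα : 0 < α₀)
    (f : ℕ → Polynomial ℝ)
    (hmonic : ∀ n, (f n).Monic)
    (hsplit : ∀ n, Multiset.card (f n).roots = (f n).natDegree)
    (hroots : ∀ n, ∀ x ∈ (f n).roots, x ∈ Set.Icc (-A) A)
    (hdeg : Tendsto (fun n => (f n).natDegree) atTop atTop)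
    (hp1 : (fun n => ((f n).roots.map (fun x => x ^ 1)).sum) =o[atTop]
      fun n => ((f n).natDegree : ℝ) ^ ((1 : ℝ) / 3))
    (hp3 : (fun n => ((f n).roots.map (fun x => x ^ 3)).sum) =o[atTop]
      fun n => ((f n).natDegree : ℝ))
    (hp2 : ∀ n, α₀ ^ 2 * ((f n).natDegree : ℝ) ≤ ((f n).roots.map (fun x => x ^ 2)).sum) :
    (fun n => (f n).coeff ((f n).natDegree - 2 * r) -
        ((-1 : ℝ) ^ r / (Nat.doubleFactorial (2 * r) : ℝ)) * (((f n).roots.map (fun x => x ^ 2)).sum) ^ r)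
      =o[atTop] fun n => ((f n).natDegree : ℝ) ^ ((r : ℝ) - 1 / 3) := by
  have key := err_littleO A hA f hsplit hroots hdeg hp1 hp3 (2 * r)
  have hg : gexp (2 * r) = (r : ℝ) - 1 / 3 := by
    rw [gexp, if_pos (even_two_mul r)]
    push_cast; ring
  rw [hg] at key
  refine key.congr' ?_ EventuallyEq.rfl
  filter_upwards [hdeg.eventually_ge_atTop (2 * r)] with n hn
  have hco := Polynomial.coeff_eq_esymm_roots_of_card (hsplit n)
    (Nat.sub_le (f n).natDegree (2 * r))
  rw [(hmonic n).leadingCoeff, one_mul, show (f n).natDegree - ((f n).natDegree - 2 * r) = 2 * r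
    by omega] at hco
  have hM2 : Mterm f (2 * r) n
      = ((-1 : ℝ) ^ r / (Nat.doubleFactorial (2 * r) : ℝ)) * (((f n).roots.map (fun x => x ^ 2)).sum) ^ r := by
    rw [Mterm, if_pos (even_two_mul r), show 2 * r / 2 = r by omega]
    rfl
  rw [hM2, hco, Even.neg_one_pow (even_two_mul r), one_mul]
end

section
/- Fix an integer r ≥ 0 and real numbers A > 0, α₀ > 0, and δ > 0. Let (f_n)_{n≥1} be a sequence of monic polynomials in ℝ[X] such that every root of every f_n is real and lies in the interval [−A, A], and write d_n = deg f_n. Assume d_n → ∞ as n → ∞, that p_1(f_n) = o(d_n^{1/3}), that p_3(f_n) = o(d_n), that p_2(f_n) ≥ α₀²·d_n for all n, and that |c_1(f_n)| ≥ δ for all n. Then there exists N such that for all n ≥ N, the coefficient c_{2r+1}(f_n) is nonzero with sign (−1)^r·sgn(c_1(f_n)), i.e. (−1)^r · c_1(f_n) · c_{2r+1}(f_n) > 0. -/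
open Polynomial Filter Asymptotics Finset MvPolynomial

noncomputable def Pj (f : ℕ → Polynomial ℝ) (j n : ℕ) : ℝ :=
  ((f n).roots.map (fun x => x ^ j)).sum

noncomputable def Ee (f : ℕ → Polynomial ℝ) (m n : ℕ) : ℝ := (f n).roots.esymm m

noncomputable def Dd (f : ℕ → Polynomial ℝ) (n : ℕ) : ℝ := ((f n).natDegree : ℝ)

noncomputable def Gg (f : ℕ → Polynomial ℝ) (m n : ℕ) : ℝ :=
  (-1) ^ (m / 2) * (Pj f 1 n) ^ (m % 2) * (Pj f 2 n) ^ (m / 2) /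
    ((2 : ℝ) ^ (m / 2) * (Nat.factorial (m / 2) : ℝ))

noncomputable def Ww (f : ℕ → Polynomial ℝ) (m n : ℕ) : ℝ :=
  (|Pj f 1 n| + 1) ^ (m % 2) * (Dd f n) ^ (m / 2)

section facts
variable (f : ℕ → Polynomial ℝ)

lemma Dd_nonneg (n : ℕ) : 0 ≤ Dd f n := Nat.cast_nonneg _

lemma Ww_nonneg (m n : ℕ) : 0 ≤ Ww f m n := by
  apply mul_nonneg
  · positivity
  · exact pow_nonneg (Dd_nonneg f n) _

lemma P2_nonneg (n : ℕ) : 0 ≤ Pj f 2 n := by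
  apply Multiset.sum_nonneg
  intro y hy
  obtain ⟨x, _, rfl⟩ := Multiset.mem_map.mp hy
  positivity

lemma Gg_abs_le {K : ℝ} (hK : 1 ≤ K) {n : ℕ} (hq : Pj f 2 n ≤ K ^ 2 * Dd f n)
    (hD : 0 ≤ Dd f n) (m : ℕ) :
    |Gg f m n| ≤ K ^ m * |Pj f 1 n| ^ (m % 2) * (Dd f n) ^ (m / 2) := by
  have hden : (1:ℝ) ≤ (2 : ℝ) ^ (m / 2) * (Nat.factorial (m / 2) : ℝ) := by
    have h1 : (1:ℝ) ≤ (2:ℝ) ^ (m / 2) := one_le_pow₀ (by norm_num)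
    have h2 : (1:ℝ) ≤ (Nat.factorial (m / 2) : ℝ) := by
      exact_mod_cast Nat.one_le_iff_ne_zero.mpr (Nat.factorial_ne_zero _)
    nlinarith
  have hq0 := P2_nonneg f n
  have h2 : (K ^ 2 * Dd f n) ^ (m / 2) ≤ K ^ m * (Dd f n) ^ (m / 2) := by
    rw [mul_pow, ← pow_mul]
    exact mul_le_mul_of_nonneg_right
      (pow_le_pow_right₀ hK (by omega)) (pow_nonneg hD _)
  calc |Gg f m n|
      = (|Pj f 1 n| ^ (m % 2) * (Pj f 2 n) ^ (m / 2)) /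
        ((2 : ℝ) ^ (m / 2) * (Nat.factorial (m / 2) : ℝ)) := by
        rw [Gg, abs_div, abs_mul, abs_mul, abs_pow, abs_pow, abs_pow, abs_neg, abs_one,
          one_pow, one_mul, abs_of_nonneg hq0,
          abs_of_nonneg (le_trans zero_le_one hden)]
    _ ≤ |Pj f 1 n| ^ (m % 2) * (Pj f 2 n) ^ (m / 2) :=
        div_le_self (by positivity) hden
    _ ≤ |Pj f 1 n| ^ (m % 2) * (K ^ 2 * Dd f n) ^ (m / 2) := by
        exact mul_le_mul_of_nonneg_left (pow_le_pow_left₀ hq0 hq _) (by positivity)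
    _ ≤ |Pj f 1 n| ^ (m % 2) * (K ^ m * (Dd f n) ^ (m / 2)) :=
        mul_le_mul_of_nonneg_left h2 (by positivity)
    _ = K ^ m * |Pj f 1 n| ^ (m % 2) * (Dd f n) ^ (m / 2) := by ring

end facts

lemma pow_sum_abs_le {s : Multiset ℝ} {K : ℝ} (hK : ∀ x ∈ s, |x| ≤ K) (j : ℕ) :
    |(s.map (fun x => x ^ j)).sum| ≤ K ^ j * Multiset.card s := by
  calc |(s.map (fun x => x ^ j)).sum| ≤ ((s.map (fun x => x ^ j)).map abs).sum :=
        Multiset.abs_sum_le_sum_abs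
    _ ≤ ((s.map (fun x => x ^ j)).map (fun _ => K ^ j)).sum := by
        apply Multiset.sum_map_le_sum_map
        intro y hy
        obtain ⟨x, hx, rfl⟩ := Multiset.mem_map.mp hy
        rw [abs_pow]
        exact pow_le_pow_left₀ (abs_nonneg x) (hK x hx) j
    _ = K ^ j * Multiset.card s := by
        simp [Multiset.map_const', mul_comm]


lemma multiset_exists_fn (s : Multiset ℝ) :
    ∃ x : Fin (Multiset.card s) → ℝ, Finset.univ.val.map x = s := by
  induction s using Quotient.inductionOn with
  | h l =>
    refine ⟨fun i => l.get (Fin.cast rfl i), ?_⟩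
    rw [Fin.univ_val_map]
    show ((List.ofFn fun i => l.get (Fin.cast rfl i) : List ℝ) : Multiset ℝ) = _
    congr 1
    exact List.ofFn_get l

lemma multiset_newton (s : Multiset ℝ) (k : ℕ) :
    (k : ℝ) * s.esymm k = (-1 : ℝ) ^ (k + 1) *
      ∑ a ∈ Finset.HasAntidiagonal.antidiagonal k with a.1 < k,
        (-1 : ℝ) ^ a.1 * s.esymm a.1 * (s.map (fun x => x ^ a.2)).sum := by
  obtain ⟨x, hx⟩ := multiset_exists_fn s
  have h := MvPolynomial.mul_esymm_eq_sum (Fin (Multiset.card s)) ℝ k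
  have h2 := congrArg (MvPolynomial.aeval x) h
  simp only [map_mul, map_sum, map_pow, map_neg, map_one, map_natCast,
    aeval_esymm_eq_multiset_esymm, hx] at h2
  convert h2 using 3 with a ha
  congr 1
  rw [psum, map_sum]
  simp only [map_pow, MvPolynomial.aeval_X]
  conv_lhs => rw [← hx]
  rw [Multiset.map_map]
  rfl

lemma multiset_newton_range (s : Multiset ℝ) (k : ℕ) :
    (k : ℝ) * s.esymm k =
      ∑ i ∈ Finset.range k,
        (-1 : ℝ) ^ (k + 1 + i) * s.esymm i * (s.map (fun x => x ^ (k - i))).sum := by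
  rw [multiset_newton, Finset.mul_sum]
  refine Finset.sum_nbij' (fun a => a.1) (fun i => (i, k - i)) ?_ ?_ ?_ ?_ ?_
  · rintro ⟨a1, a2⟩ ha
    simp only [Finset.mem_filter, Finset.HasAntidiagonal.mem_antidiagonal] at ha
    exact Finset.mem_range.mpr ha.2
  · intro i hi
    simp only [Finset.mem_range] at hi
    simp only [Finset.mem_filter, Finset.HasAntidiagonal.mem_antidiagonal]
    omega
  · rintro ⟨a1, a2⟩ ha
    simp only [Finset.mem_filter, Finset.HasAntidiagonal.mem_antidiagonal] at ha
    simp only [Prod.mk.injEq]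
    refine ⟨trivial, ?_⟩
    omega
  · intro i hi; rfl
  · rintro ⟨a1, a2⟩ ha
    simp only [Finset.mem_filter, Finset.HasAntidiagonal.mem_antidiagonal] at ha
    have : a2 = k - a1 := by omega
    subst this
    rw [pow_add, pow_add]
    ring

set_option maxHeartbeats 1000000 in
lemma key (A : ℝ) (hA : 0 < A) (f : ℕ → Polynomial ℝ)
    (hsplit : ∀ n, Multiset.card (f n).roots = (f n).natDegree)
    (hroots : ∀ n, ∀ x ∈ (f n).roots, x ∈ Set.Icc (-A) A)
    (hdeg : Tendsto (fun n => (f n).natDegree) atTop atTop)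
    (hp1 : (fun n => ((f n).roots.map (fun x => x ^ 1)).sum) =o[atTop]
      fun n => ((f n).natDegree : ℝ) ^ ((1 : ℝ) / 3))
    (hp3 : (fun n => ((f n).roots.map (fun x => x ^ 3)).sum) =o[atTop]
      fun n => ((f n).natDegree : ℝ)) :
    ∀ m : ℕ, ∀ ε > (0:ℝ), ∀ᶠ n in atTop,
      |Ee f m n - Gg f m n| ≤ ε * Ww f m n := by
  -- various constants and basic facts
  set K := max A 1 with hKdef
  have hK : 1 ≤ K := le_max_right _ _
  have hK0 : 0 < K := lt_of_lt_of_le one_pos hK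
  have habs : ∀ n, ∀ x ∈ (f n).roots, |x| ≤ K := by
    intro n x hx
    rcases hroots n x hx with ⟨h1, h2⟩
    rw [abs_le]
    constructor
    · exact le_trans (neg_le_neg (le_max_left A 1)) h1
    · exact le_trans h2 (le_max_left A 1)
  have hpjb : ∀ j n, |Pj f j n| ≤ K ^ j * Dd f n := by
    intro j n
    have := pow_sum_abs_le (habs n) j
    rwa [hsplit n] at this
  have hDge : ∀ c : ℝ, ∀ᶠ n in atTop, c ≤ Dd f n := by
    intro c
    have : Tendsto (fun n => Dd f n) atTop atTop :=
      (tendsto_natCast_atTop_atTop).comp hdeg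
    exact this.eventually_ge_atTop c
  have hrpow : ∀ᶠ n in atTop, ((f n).natDegree : ℝ) ^ ((1:ℝ)/3) ≤ Dd f n := by
    filter_upwards [hDge 1] with n hD
    calc ((f n).natDegree : ℝ) ^ ((1:ℝ)/3) ≤ ((f n).natDegree : ℝ) ^ (1:ℝ) :=
          Real.rpow_le_rpow_of_exponent_le hD (by norm_num)
      _ = Dd f n := Real.rpow_one _
  have hs1 : ∀ ε > (0:ℝ), ∀ᶠ n in atTop, |Pj f 1 n| ≤ ε * Dd f n := by
    intro ε hε
    filter_upwards [hp1.def hε, hrpow, hDge 1] with n hn hr hD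
    calc |Pj f 1 n| ≤ ε * ‖((f n).natDegree : ℝ) ^ ((1:ℝ)/3)‖ := hn
      _ = ε * ((f n).natDegree : ℝ) ^ ((1:ℝ)/3) := by
          rw [Real.norm_eq_abs, abs_of_nonneg (Real.rpow_nonneg (Nat.cast_nonneg _) _)]
      _ ≤ ε * Dd f n := by exact mul_le_mul_of_nonneg_left hr (le_of_lt hε)
  have hs1' : ∀ c' > (0:ℝ), ∀ᶠ n in atTop, |Pj f 1 n| + 1 ≤ c' * Dd f n := by
    intro c' hc'
    filter_upwards [hs1 (c'/2) (by positivity), hDge (2/c')] with n h1 h2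
    have h3 : (1:ℝ) ≤ (c'/2) * Dd f n := by
      have : (2:ℝ)/c' * (c'/2) = 1 := by field_simp
      calc (1:ℝ) = (2/c') * (c'/2) := this.symm
        _ ≤ Dd f n * (c'/2) := mul_le_mul_of_nonneg_right h2 (by positivity)
        _ = (c'/2) * Dd f n := by ring
    have : (c'/2) * Dd f n + (c'/2) * Dd f n = c' * Dd f n := by ring
    linarith
  have hs2 : ∀ ε > (0:ℝ), ∀ᶠ n in atTop, (Pj f 1 n) ^ 2 ≤ ε * Dd f n := by
    intro ε hε
    have hsq : (0:ℝ) < Real.sqrt ε := Real.sqrt_pos.mpr hε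
    filter_upwards [hp1.def hsq, hDge 1] with n hn hD
    have h0 : (0:ℝ) ≤ ((f n).natDegree : ℝ) ^ ((1:ℝ)/3) :=
      Real.rpow_nonneg (Nat.cast_nonneg _) _
    have h1 : |Pj f 1 n| ≤ Real.sqrt ε * ((f n).natDegree : ℝ) ^ ((1:ℝ)/3) := by
      calc |Pj f 1 n| ≤ Real.sqrt ε * ‖((f n).natDegree : ℝ) ^ ((1:ℝ)/3)‖ := hn
        _ = Real.sqrt ε * ((f n).natDegree : ℝ) ^ ((1:ℝ)/3) := by
            rw [Real.norm_eq_abs, abs_of_nonneg h0]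
    have h2 : (Pj f 1 n) ^ 2 ≤ (Real.sqrt ε * ((f n).natDegree : ℝ) ^ ((1:ℝ)/3)) ^ 2 := by
      rw [← sq_abs (Pj f 1 n)]
      exact pow_le_pow_left₀ (abs_nonneg _) h1 2
    have h3 : (Real.sqrt ε * ((f n).natDegree : ℝ) ^ ((1:ℝ)/3)) ^ 2
        = ε * (((f n).natDegree : ℝ) ^ ((1:ℝ)/3)) ^ 2 := by
      rw [mul_pow, Real.sq_sqrt (le_of_lt hε)]
    have h4 : (((f n).natDegree : ℝ) ^ ((1:ℝ)/3)) ^ 2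
        = ((f n).natDegree : ℝ) ^ ((2:ℝ)/3) := by
      rw [← Real.rpow_natCast (((f n).natDegree : ℝ) ^ ((1:ℝ)/3)) 2,
        ← Real.rpow_mul (Nat.cast_nonneg _)]
      norm_num
    have h5 : ((f n).natDegree : ℝ) ^ ((2:ℝ)/3) ≤ Dd f n := by
      calc ((f n).natDegree : ℝ) ^ ((2:ℝ)/3) ≤ ((f n).natDegree : ℝ) ^ (1:ℝ) :=
            Real.rpow_le_rpow_of_exponent_le hD (by norm_num)
        _ = Dd f n := Real.rpow_one _
    calc (Pj f 1 n) ^ 2 ≤ ε * ((f n).natDegree : ℝ) ^ ((2:ℝ)/3) := by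
          rw [← h4, ← h3]; exact h2
      _ ≤ ε * Dd f n := mul_le_mul_of_nonneg_left h5 (le_of_lt hε)
  have hs3 : ∀ ε > (0:ℝ), ∀ᶠ n in atTop, |Pj f 3 n| ≤ ε * Dd f n := by
    intro ε hε
    filter_upwards [hp3.def hε, hDge 0] with n hn hD
    calc |Pj f 3 n| = ‖((f n).roots.map (fun x => x ^ 3)).sum‖ := rfl
      _ ≤ ε * ‖((f n).natDegree : ℝ)‖ := hn
      _ = ε * Dd f n := by rw [Real.norm_eq_abs, abs_of_nonneg (Nat.cast_nonneg _)]; rfl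
  -- the strong induction
  intro m
  induction m using Nat.strong_induction_on with
  | _ m ih =>
    match m with
    | 0 =>
      intro ε hε
      filter_upwards with n
      have h1 : Ee f 0 n = 1 := by simp [Ee, Multiset.esymm]
      have h2 : Gg f 0 n = 1 := by simp [Gg]
      have h3 : Ww f 0 n = 1 := by simp [Ww]
      rw [h1, h2, h3, sub_self, abs_zero]
      positivity
    | 1 =>
      intro ε hε
      filter_upwards with n
      have h1 : Ee f 1 n = Pj f 1 n := by
        simp [Ee, Pj, Multiset.esymm, Multiset.powersetCard_one]
      have h2 : Gg f 1 n = Pj f 1 n := by simp [Gg]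
      rw [h1, h2, sub_self, abs_zero]
      have := Ww_nonneg f 1 n
      positivity
    | (m + 2) =>
      intro ε hε
      -- Newton's identity, rearranged
      have hNewt : ∀ n, ((m+2 : ℕ) : ℝ) * Ee f (m+2) n =
          Pj f 1 n * Ee f (m+1) n - Pj f 2 n * Ee f m n +
          ∑ i ∈ Finset.range m, (-1:ℝ)^(m+3+i) * Ee f i n * Pj f (m+2-i) n := by
        intro n
        have hN := multiset_newton_range (f n).roots (m+2)
        rw [Finset.sum_range_succ, Finset.sum_range_succ] at hN
        have e1 : m + 2 - (m+1) = 1 := by omega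
        have e2 : m + 2 - m = 2 := by omega
        rw [e1, e2] at hN
        have s1 : (-1:ℝ)^(m+2+1+(m+1)) = 1 := Even.neg_one_pow ⟨m+2, by ring⟩
        have s2 : (-1:ℝ)^(m+2+1+m) = -1 := Odd.neg_one_pow ⟨m+1, by ring⟩
        rw [s1, s2] at hN
        show ((m+2 : ℕ) : ℝ) * (f n).roots.esymm (m+2) =
          ((f n).roots.map (fun x => x ^ 1)).sum * (f n).roots.esymm (m+1)
          - ((f n).roots.map (fun x => x ^ 2)).sum * (f n).roots.esymm m
          + ∑ i ∈ Finset.range m,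
              (-1:ℝ)^(m+3+i) * (f n).roots.esymm i *
                ((f n).roots.map (fun x => x ^ (m+2-i))).sum
        rw [hN]
        have : ∀ i, m + 2 + 1 + i = m + 3 + i := by omega
        simp only [this]
        ring
      -- the identity for the main terms
      have hGid : ∀ n, ((m+2:ℕ):ℝ) * Gg f (m+2) n =
          (((m+2) % 2 : ℕ) : ℝ) * Pj f 1 n * Gg f (m+1) n
            - Pj f 2 n * Gg f m n := by
        intro n
        have hfact : ∀ a : ℕ, (Nat.factorial a : ℝ) ≠ 0 := by
          intro a; exact_mod_cast Nat.factorial_ne_zero a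
        have h2pow : ∀ a : ℕ, ((2:ℝ))^a ≠ 0 := fun a => pow_ne_zero a two_ne_zero
        rcases Nat.even_or_odd m with ⟨a, rfl⟩ | ⟨a, rfl⟩
        · have d1 : (a + a + 2) / 2 = a + 1 := by omega
          have d2 : (a + a + 2) % 2 = 0 := by omega
          have d3 : (a + a + 1) / 2 = a := by omega
          have d4 : (a + a + 1) % 2 = 1 := by omega
          have d5 : (a + a) / 2 = a := by omega
          have d6 : (a + a) % 2 = 0 := by omega
          simp only [Gg, d1, d2, d3, d4, d5, d6, Nat.factorial_succ, pow_zero, pow_one,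
            Nat.cast_zero, Nat.cast_mul, Nat.cast_add, Nat.cast_one, Nat.cast_ofNat]
          field_simp
          ring
        · have d1 : (2*a + 1 + 2) / 2 = a + 1 := by omega
          have d2 : (2*a + 1 + 2) % 2 = 1 := by omega
          have d3 : (2*a + 1 + 1) / 2 = a + 1 := by omega
          have d4 : (2*a + 1 + 1) % 2 = 0 := by omega
          have d5 : (2*a + 1) / 2 = a := by omega
          have d6 : (2*a + 1) % 2 = 1 := by omega
          simp only [Gg, d1, d2, d3, d4, d5, d6, Nat.factorial_succ, pow_zero, pow_one,
            Nat.cast_zero, Nat.cast_mul, Nat.cast_add, Nat.cast_one, Nat.cast_ofNat]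
          field_simp
          ring
      -- pointwise decomposition of the error
      have hkey2 : ∀ n, ((m+2:ℕ):ℝ) * (Ee f (m+2) n - Gg f (m+2) n) =
          Pj f 1 n * (Ee f (m+1) n - Gg f (m+1) n)
          - Pj f 2 n * (Ee f m n - Gg f m n)
          + (1 - (((m+2) % 2 : ℕ):ℝ)) * Pj f 1 n * Gg f (m+1) n
          + ∑ i ∈ Finset.range m, (-1:ℝ)^(m+3+i) * Ee f i n * Pj f (m+2-i) n := by
        intro n
        have h1 := hNewt n
        have h2 := hGid n
        rw [mul_sub, h1, h2]
        ring
      -- constants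
      set C : ℝ := K ^ (m+2) + 1 with hCdef
      have hC0 : 0 < C := by positivity
      have hqb : ∀ n, Pj f 2 n ≤ K ^ 2 * Dd f n :=
        fun n => le_trans (le_abs_self _) (hpjb 2 n)
      have pbnd : ∀ j, j ≤ m + 2 → ∀ n, |Pj f j n| ≤ K ^ (m+2) * Dd f n := by
        intro j hj n
        exact le_trans (hpjb j n)
          (mul_le_mul_of_nonneg_right (pow_le_pow_right₀ hK hj) (Dd_nonneg f n))
      -- a priori bound on esymm
      have ebnd : ∀ i, i < m + 2 → ∀ᶠ n in atTop,
          |Ee f i n| ≤ C * ((|Pj f 1 n| + 1) ^ (i % 2) * (Dd f n) ^ (i / 2)) := by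
        intro i hi
        filter_upwards [ih i hi 1 one_pos] with n h1
        have hD := Dd_nonneg f n
        have hg := Gg_abs_le f hK (hqb n) hD i
        have hg2 : |Gg f i n| ≤ K ^ (m+2) * ((|Pj f 1 n| + 1) ^ (i % 2) * (Dd f n) ^ (i / 2)) := by
          calc |Gg f i n| ≤ K ^ i * |Pj f 1 n| ^ (i % 2) * (Dd f n) ^ (i / 2) := hg
            _ ≤ K ^ (m+2) * (|Pj f 1 n| + 1) ^ (i % 2) * (Dd f n) ^ (i / 2) := by
                apply mul_le_mul_of_nonneg_right _ (pow_nonneg hD _)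
                apply mul_le_mul (pow_le_pow_right₀ hK (by omega))
                  (pow_le_pow_left₀ (abs_nonneg _) (by linarith) _)
                  (by positivity) (by positivity)
            _ = K ^ (m+2) * ((|Pj f 1 n| + 1) ^ (i % 2) * (Dd f n) ^ (i / 2)) := by ring
        have hEe : |Ee f i n| ≤ |Gg f i n| + Ww f i n := by
          have : Ee f i n = Gg f i n + (Ee f i n - Gg f i n) := by ring
          rw [this]
          refine le_trans (abs_add_le _ _) ?_
          have h1' : |Ee f i n - Gg f i n| ≤ Ww f i n := by
            simpa using h1
          linarith
        have hWweq : Ww f i n = (|Pj f 1 n| + 1) ^ (i % 2) * (Dd f n) ^ (i / 2) := rfl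
        rw [hWweq] at hEe
        rw [hCdef]
        nlinarith [hg2, hEe]
      set εt : ℝ := ε / 2 with hεtdef
      have hεt : 0 < εt := by positivity
      -- T1
      have T1b : ∀ᶠ n in atTop,
          |Pj f 1 n * (Ee f (m+1) n - Gg f (m+1) n)| ≤ εt * Ww f (m+2) n := by
        filter_upwards [ih (m+1) (by omega) (εt/2) (by positivity),
          hs1 (1/2) (by norm_num), hs2 (1/2) (by norm_num), hDge 1] with n h1 hA1 hA2 hD1
        have hD := Dd_nonneg f n
        rw [abs_mul]
        rcases Nat.even_or_odd m with ⟨a, rfl⟩ | ⟨a, rfl⟩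
        · have d1 : (a + a + 1) % 2 = 1 := by omega
          have d2 : (a + a + 1) / 2 = a := by omega
          have d3 : (a + a + 2) % 2 = 0 := by omega
          have d4 : (a + a + 2) / 2 = a + 1 := by omega
          have hw1 : Ww f (a+a+1) n = (|Pj f 1 n| + 1) * (Dd f n) ^ a := by
            rw [Ww, d1, d2, pow_one]
          have hw2 : Ww f (a+a+2) n = (Dd f n) ^ (a+1) := by
            rw [Ww, d3, d4, pow_zero, one_mul]
          rw [hw1] at h1
          rw [hw2, pow_succ]
          have hp0 : (0:ℝ) ≤ |Pj f 1 n| := abs_nonneg _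
          have hDa : (0:ℝ) ≤ (Dd f n) ^ a := pow_nonneg hD _
          have key1 : |Pj f 1 n| * (|Pj f 1 n| + 1) ≤ 2 * Dd f n := by
            nlinarith [sq_abs (Pj f 1 n)]
          calc |Pj f 1 n| * |Ee f (a+a+1) n - Gg f (a+a+1) n|
              ≤ |Pj f 1 n| * (εt/2 * ((|Pj f 1 n| + 1) * (Dd f n) ^ a)) :=
                mul_le_mul_of_nonneg_left h1 hp0
            _ = (εt/2) * (|Pj f 1 n| * (|Pj f 1 n| + 1)) * (Dd f n) ^ a := by ring
            _ ≤ (εt/2) * (2 * Dd f n) * (Dd f n) ^ a := by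
                apply mul_le_mul_of_nonneg_right _ hDa
                exact mul_le_mul_of_nonneg_left key1 (by positivity)
            _ = εt * ((Dd f n) ^ a * Dd f n) := by ring
        · have d1 : (2*a + 1 + 1) % 2 = 0 := by omega
          have d2 : (2*a + 1 + 1) / 2 = a + 1 := by omega
          have d3 : (2*a + 1 + 2) % 2 = 1 := by omega
          have d4 : (2*a + 1 + 2) / 2 = a + 1 := by omega
          have hw1 : Ww f (2*a+1+1) n = (Dd f n) ^ (a+1) := by
            rw [Ww, d1, d2, pow_zero, one_mul]
          have hw2 : Ww f (2*a+1+2) n = (|Pj f 1 n| + 1) * (Dd f n) ^ (a+1) := by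
            rw [Ww, d3, d4, pow_one]
          rw [hw1] at h1
          rw [hw2]
          have hp0 : (0:ℝ) ≤ |Pj f 1 n| := abs_nonneg _
          have hDa : (0:ℝ) ≤ (Dd f n) ^ (a+1) := pow_nonneg hD _
          calc |Pj f 1 n| * |Ee f (2*a+1+1) n - Gg f (2*a+1+1) n|
              ≤ |Pj f 1 n| * (εt/2 * (Dd f n) ^ (a+1)) :=
                mul_le_mul_of_nonneg_left h1 hp0
            _ ≤ (|Pj f 1 n| + 1) * (εt * (Dd f n) ^ (a+1)) := by
                have base : (0:ℝ) ≤ εt * (Dd f n) ^ (a+1) :=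
                  mul_nonneg (le_of_lt hεt) hDa
                nlinarith [mul_nonneg hp0 base, base]
            _ = εt * ((|Pj f 1 n| + 1) * (Dd f n) ^ (a+1)) := by ring
      -- T2
      have T2b : ∀ᶠ n in atTop,
          |Pj f 2 n * (Ee f m n - Gg f m n)| ≤ εt * Ww f (m+2) n := by
        filter_upwards [ih m (by omega) (εt/K^2) (by positivity)] with n h1
        have hwD : Ww f (m+2) n = Dd f n * Ww f m n := by
          have d1 : (m+2) % 2 = m % 2 := by omega
          have d2 : (m+2) / 2 = m / 2 + 1 := by omega
          rw [Ww, Ww, d1, d2, pow_succ]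
          ring
        rw [abs_mul, hwD]
        have h2 : |Pj f 2 n| ≤ K^2 * Dd f n := hpjb 2 n
        have hW0 : 0 ≤ Ww f m n := Ww_nonneg f m n
        have hD := Dd_nonneg f n
        calc |Pj f 2 n| * |Ee f m n - Gg f m n|
            ≤ (K^2 * Dd f n) * (εt/K^2 * Ww f m n) :=
              mul_le_mul h2 h1 (abs_nonneg _) (by positivity)
          _ = (K^2 * (εt/K^2)) * (Dd f n * Ww f m n) := by ring
          _ = εt * (Dd f n * Ww f m n) := by
              rw [mul_comm (K^2) (εt/K^2), div_mul_cancel₀ _ (ne_of_gt (by positivity : (0:ℝ) < K^2))]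
      -- T3
      have T3b : ∀ᶠ n in atTop,
          |(1 - (((m+2) % 2 : ℕ):ℝ)) * Pj f 1 n * Gg f (m+1) n| ≤ εt * Ww f (m+2) n := by
        rcases Nat.even_or_odd m with ⟨a, rfl⟩ | ⟨a, rfl⟩
        · have d3 : (a + a + 2) % 2 = 0 := by omega
          have d4 : (a + a + 2) / 2 = a + 1 := by omega
          have d1 : (a + a + 1) % 2 = 1 := by omega
          have d2 : (a + a + 1) / 2 = a := by omega
          filter_upwards [hs2 (εt / K^(a+a+1)) (by positivity), hDge 1] with n hA2 hD1
          have hD := Dd_nonneg f n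
          rw [d3]
          have hg := Gg_abs_le f hK (hqb n) hD (a+a+1)
          rw [d1, d2, pow_one] at hg
          have hw2 : Ww f (a+a+2) n = (Dd f n) ^ (a+1) := by
            rw [Ww, d3, d4, pow_zero, one_mul]
          rw [hw2]
          simp only [Nat.cast_zero, sub_zero, one_mul]
          rw [abs_mul]
          calc |Pj f 1 n| * |Gg f (a+a+1) n|
              ≤ |Pj f 1 n| * (K ^ (a+a+1) * |Pj f 1 n| * (Dd f n) ^ a) :=
                mul_le_mul_of_nonneg_left hg (abs_nonneg _)
            _ = K ^ (a+a+1) * (Pj f 1 n)^2 * (Dd f n) ^ a := by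
                rw [← sq_abs]; ring
            _ ≤ K ^ (a+a+1) * (εt / K^(a+a+1) * Dd f n) * (Dd f n) ^ a := by
                apply mul_le_mul_of_nonneg_right _ (pow_nonneg hD _)
                exact mul_le_mul_of_nonneg_left hA2 (by positivity)
            _ = (K^(a+a+1) * (εt/K^(a+a+1))) * ((Dd f n) ^ a * Dd f n) := by ring
            _ = εt * ((Dd f n) ^ a * Dd f n) := by
                rw [mul_comm (K^(a+a+1)) (εt/K^(a+a+1)),
                  div_mul_cancel₀ _ (ne_of_gt (by positivity : (0:ℝ) < K^(a+a+1)))]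
            _ = εt * (Dd f n) ^ (a+1) := by rw [pow_succ]
        · have d3 : (2*a + 1 + 2) % 2 = 1 := by omega
          filter_upwards with n
          rw [d3]
          simp only [Nat.cast_one, sub_self, zero_mul]
          rw [abs_zero]
          exact mul_nonneg (le_of_lt hεt) (Ww_nonneg f _ n)
      -- T4 per term
      have T4i : ∀ i ∈ Finset.range m, ∀ᶠ n in atTop,
          |Ee f i n| * |Pj f (m+2-i) n| ≤ (εt/(m+1)) * (Dd f n) ^ ((m+2)/2) := by
        intro i hi
        rw [Finset.mem_range] at hi
        set c : ℝ := εt/(m+1) with hcdef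
        have hc0 : 0 < c := by positivity
        by_cases hodd : i % 2 = 1
        · have hle : i/2 + 2 ≤ (m+2)/2 := by omega
          filter_upwards [ebnd i (by omega), hs1' (c/(C*K^(m+2))) (by positivity),
            hDge 1] with n h1 hp1D hD1
          have hD := Dd_nonneg f n
          rw [hodd, pow_one] at h1
          have hQ : (0:ℝ) < C * K^(m+2) := by positivity
          have hcan : (C * K^(m+2)) * (c/(C*K^(m+2))) = c := by
            rw [mul_comm, div_mul_cancel₀ _ (ne_of_gt hQ)]
          calc |Ee f i n| * |Pj f (m+2-i) n|
              ≤ (C * ((|Pj f 1 n| + 1) * (Dd f n) ^ (i/2))) * (K^(m+2) * Dd f n) := by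
                apply mul_le_mul h1 (pbnd (m+2-i) (by omega) n) (abs_nonneg _)
                positivity
            _ = (C * K^(m+2)) * (|Pj f 1 n| + 1) * ((Dd f n) ^ (i/2) * Dd f n) := by ring
            _ ≤ (C * K^(m+2)) * ((c/(C*K^(m+2))) * Dd f n) * ((Dd f n) ^ (i/2) * Dd f n) := by
                apply mul_le_mul_of_nonneg_right
                  (mul_le_mul_of_nonneg_left hp1D (by positivity)) (by positivity)
            _ = ((C * K^(m+2)) * (c/(C*K^(m+2)))) * ((Dd f n) ^ (i/2) * (Dd f n * Dd f n)) := by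
                ring
            _ = c * (Dd f n) ^ (i/2 + 2) := by
                rw [hcan, pow_add]
                ring
            _ ≤ c * (Dd f n) ^ ((m+2)/2) :=
                mul_le_mul_of_nonneg_left (pow_le_pow_right₀ hD1 hle) (le_of_lt hc0)
        · have hieven : i % 2 = 0 := by omega
          by_cases h3 : m + 2 - i = 3
          · have hle : i/2 + 1 ≤ (m+2)/2 := by omega
            filter_upwards [ebnd i (by omega), hs3 (c/C) (by positivity), hDge 1]
              with n h1 hA3 hD1
            have hD := Dd_nonneg f n
            rw [hieven, pow_zero, one_mul] at h1
            rw [h3]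
            calc |Ee f i n| * |Pj f 3 n|
                ≤ (C * (Dd f n) ^ (i/2)) * ((c/C) * Dd f n) := by
                  apply mul_le_mul h1 hA3 (abs_nonneg _) (by positivity)
              _ = (C * (c/C)) * ((Dd f n) ^ (i/2) * Dd f n) := by ring
              _ = c * (Dd f n) ^ (i/2 + 1) := by
                  rw [mul_comm C (c/C), div_mul_cancel₀ _ (ne_of_gt hC0), pow_succ]
              _ ≤ c * (Dd f n) ^ ((m+2)/2) :=
                  mul_le_mul_of_nonneg_left (pow_le_pow_right₀ hD1 hle) (le_of_lt hc0)
          · have hle : i/2 + 2 ≤ (m+2)/2 := by omega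
            filter_upwards [ebnd i (by omega), hDge (C*K^(m+2)/c), hDge 1]
              with n h1 hDc hD1
            have hD := Dd_nonneg f n
            rw [hieven, pow_zero, one_mul] at h1
            have hCK : C * K^(m+2) ≤ c * Dd f n := by
              rw [div_le_iff₀ hc0] at hDc
              linarith [hDc]
            calc |Ee f i n| * |Pj f (m+2-i) n|
                ≤ (C * (Dd f n) ^ (i/2)) * (K^(m+2) * Dd f n) := by
                  apply mul_le_mul h1 (pbnd (m+2-i) (by omega) n) (abs_nonneg _)
                  positivity
              _ = (C * K^(m+2)) * ((Dd f n) ^ (i/2) * Dd f n) := by ring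
              _ ≤ (c * Dd f n) * ((Dd f n) ^ (i/2) * Dd f n) :=
                  mul_le_mul_of_nonneg_right hCK (by positivity)
              _ = c * (Dd f n) ^ (i/2 + 2) := by ring
              _ ≤ c * (Dd f n) ^ ((m+2)/2) :=
                  mul_le_mul_of_nonneg_left (pow_le_pow_right₀ hD1 hle) (le_of_lt hc0)
      -- T4 sum
      have T4b : ∀ᶠ n in atTop,
          |∑ i ∈ Finset.range m, (-1:ℝ)^(m+3+i) * Ee f i n * Pj f (m+2-i) n|
            ≤ εt * Ww f (m+2) n := by
        have hall : ∀ᶠ n in atTop, ∀ i ∈ Finset.range m,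
            |Ee f i n| * |Pj f (m+2-i) n| ≤ (εt/(m+1)) * (Dd f n) ^ ((m+2)/2) :=
          (Filter.eventually_all_finset _).mpr T4i
        filter_upwards [hall, hDge 1] with n hn hD1
        have hD := Dd_nonneg f n
        have hDk : (0:ℝ) ≤ (Dd f n) ^ ((m+2)/2) := pow_nonneg hD _
        calc |∑ i ∈ Finset.range m, (-1:ℝ)^(m+3+i) * Ee f i n * Pj f (m+2-i) n|
            ≤ ∑ i ∈ Finset.range m, |(-1:ℝ)^(m+3+i) * Ee f i n * Pj f (m+2-i) n| :=
              Finset.abs_sum_le_sum_abs _ _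
          _ ≤ ∑ i ∈ Finset.range m, (εt/(m+1)) * (Dd f n) ^ ((m+2)/2) := by
              apply Finset.sum_le_sum
              intro i hi
              have := hn i hi
              calc |(-1:ℝ)^(m+3+i) * Ee f i n * Pj f (m+2-i) n|
                  = |Ee f i n| * |Pj f (m+2-i) n| := by
                    rw [abs_mul, abs_mul, abs_pow, abs_neg, abs_one, one_pow, one_mul]
                _ ≤ (εt/(m+1)) * (Dd f n) ^ ((m+2)/2) := this
          _ = (m : ℝ) * ((εt/(m+1)) * (Dd f n) ^ ((m+2)/2)) := by
              rw [Finset.sum_const, Finset.card_range, nsmul_eq_mul]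
          _ ≤ εt * (Dd f n) ^ ((m+2)/2) := by
              rw [div_eq_mul_inv]
              have hm1 : (0:ℝ) < (m:ℝ) + 1 := by positivity
              have : (m:ℝ) * (εt * ((m:ℝ)+1)⁻¹) ≤ εt := by
                rw [mul_comm, mul_assoc]
                nlinarith [mul_pos hεt (inv_pos.mpr hm1), inv_pos.mpr hm1,
                  mul_inv_cancel₀ (ne_of_gt hm1)]
              calc (m:ℝ) * (εt * ((m:ℝ)+1)⁻¹ * (Dd f n) ^ ((m+2)/2))
                  = ((m:ℝ) * (εt * ((m:ℝ)+1)⁻¹)) * (Dd f n) ^ ((m+2)/2) := by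
                    push_cast
                    ring
                _ ≤ εt * (Dd f n) ^ ((m+2)/2) :=
                    mul_le_mul_of_nonneg_right this hDk
          _ ≤ εt * Ww f (m+2) n := by
              apply mul_le_mul_of_nonneg_left _ (le_of_lt hεt)
              rw [Ww]
              have h1 : (1:ℝ) ≤ (|Pj f 1 n| + 1) ^ ((m+2) % 2) := by
                apply one_le_pow₀
                linarith [abs_nonneg (Pj f 1 n)]
              nlinarith [hDk]
      -- combine
      filter_upwards [T1b, T2b, T3b, T4b] with n h1 h2 h3 h4
      have hk := hkey2 n
      have hW := Ww_nonneg f (m+2) n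
      have habs2 : ((m+2:ℕ):ℝ) * |Ee f (m+2) n - Gg f (m+2) n|
          ≤ 4 * (εt * Ww f (m+2) n) := by
        have e0 : ((m+2:ℕ):ℝ) * |Ee f (m+2) n - Gg f (m+2) n|
            = |((m+2:ℕ):ℝ) * (Ee f (m+2) n - Gg f (m+2) n)| := by
          rw [abs_mul, abs_of_nonneg (by positivity : (0:ℝ) ≤ ((m+2:ℕ):ℝ))]
        rw [e0, hk]
        set t1 := Pj f 1 n * (Ee f (m+1) n - Gg f (m+1) n) with ht1
        set t2 := Pj f 2 n * (Ee f m n - Gg f m n) with ht2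
        set t3 := (1 - (((m+2) % 2 : ℕ):ℝ)) * Pj f 1 n * Gg f (m+1) n with ht3
        set t4 := ∑ i ∈ Finset.range m, (-1:ℝ)^(m+3+i) * Ee f i n * Pj f (m+2-i) n with ht4
        have e1 : |t1 - t2 + t3 + t4| ≤ |t1| + |t2| + |t3| + |t4| := by
          have a1 : |t1 - t2 + t3 + t4| ≤ |t1 - t2 + t3| + |t4| := abs_add_le _ _
          have a2 : |t1 - t2 + t3| ≤ |t1 - t2| + |t3| := abs_add_le _ _
          have a3 : |t1 - t2| ≤ |t1| + |t2| := abs_sub _ _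
          linarith
        linarith
      have hm2 : (2:ℝ) ≤ ((m+2:ℕ):ℝ) := by
        push_cast; linarith [Nat.cast_nonneg (α := ℝ) m]
      have habs0 : (0:ℝ) ≤ |Ee f (m+2) n - Gg f (m+2) n| := abs_nonneg _
      have : 2 * |Ee f (m+2) n - Gg f (m+2) n| ≤ 4 * (εt * Ww f (m+2) n) := by
        nlinarith
      rw [hεtdef] at this
      linarith

/-- Under the same hypotheses, together with `|c₁(fₙ)| ≥ δ > 0`, the odd-indexed
coefficient `c_{2r+1}(fₙ)` eventually has sign `(-1)^r ⬝ sgn (c₁(fₙ))`. -/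
theorem coeff_two_r_add_one_sign (r : ℕ) (A α₀ δ : ℝ) (hA : 0 < A) (hα : 0 < α₀)
    (hδ : 0 < δ)
    (f : ℕ → Polynomial ℝ)
    (hmonic : ∀ n, (f n).Monic)
    (hsplit : ∀ n, Multiset.card (f n).roots = (f n).natDegree)
    (hroots : ∀ n, ∀ x ∈ (f n).roots, x ∈ Set.Icc (-A) A)
    (hdeg : Tendsto (fun n => (f n).natDegree) atTop atTop)
    (hp1 : (fun n => ((f n).roots.map (fun x => x ^ 1)).sum) =o[atTop]
      fun n => ((f n).natDegree : ℝ) ^ ((1 : ℝ) / 3))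
    (hp3 : (fun n => ((f n).roots.map (fun x => x ^ 3)).sum) =o[atTop]
      fun n => ((f n).natDegree : ℝ))
    (hp2 : ∀ n, α₀ ^ 2 * ((f n).natDegree : ℝ) ≤ ((f n).roots.map (fun x => x ^ 2)).sum)
    (hc1 : ∀ n, δ ≤ |(f n).coeff ((f n).natDegree - 1)|) :
    ∃ N : ℕ, ∀ n ≥ N,
      0 < (-1 : ℝ) ^ r * (f n).coeff ((f n).natDegree - 1) *
        (f n).coeff ((f n).natDegree - (2 * r + 1)) := by
  -- Vieta
  have hco : ∀ n, ∀ m, m ≤ (f n).natDegree →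
      (f n).coeff ((f n).natDegree - m) = (-1:ℝ)^m * Ee f m n := by
    intro n m hm
    have h := Polynomial.coeff_eq_esymm_roots_of_card (hsplit n)
      (k := (f n).natDegree - m) (Nat.sub_le _ _)
    rw [(hmonic n).leadingCoeff, one_mul, Nat.sub_sub_self hm] at h
    exact h
  have he1 : ∀ n, Ee f 1 n = Pj f 1 n := by
    intro n
    simp [Ee, Pj, Multiset.esymm, Multiset.powersetCard_one]
  -- constants
  set F : ℝ := (2:ℝ)^r * (Nat.factorial r : ℝ) with hFdef
  have hF0 : 0 < F := by
    apply mul_pos (by positivity)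
    exact_mod_cast Nat.factorial_pos r
  set εs : ℝ := (α₀^2)^r / (2 * F * (1 + 1/δ)) with hεsdef
  have h1δ : (0:ℝ) < 1 + 1/δ := by positivity
  have hεs0 : 0 < εs := by positivity
  have hGeq : ∀ n, Gg f (2*r+1) n = (-1:ℝ)^r * Pj f 1 n * (Pj f 2 n)^r / F := by
    intro n
    rw [Gg]
    have d1 : (2*r+1)/2 = r := by omega
    have d2 : (2*r+1)%2 = 1 := by omega
    rw [d1, d2, pow_one, hFdef]
  have hWeq : ∀ n, Ww f (2*r+1) n = (|Pj f 1 n| + 1) * (Dd f n)^r := by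
    intro n
    rw [Ww]
    have d1 : (2*r+1)/2 = r := by omega
    have d2 : (2*r+1)%2 = 1 := by omega
    rw [d1, d2, pow_one]
  have hkey := key A hA f hsplit hroots hdeg hp1 hp3 (2*r+1) εs hεs0
  have hdegev : ∀ᶠ n in atTop, 2*r+1 ≤ (f n).natDegree :=
    hdeg.eventually_ge_atTop (2*r+1)
  have hall : ∀ᶠ n in atTop,
      0 < (-1 : ℝ) ^ r * (f n).coeff ((f n).natDegree - 1) *
        (f n).coeff ((f n).natDegree - (2 * r + 1)) := by
    filter_upwards [hkey, hdegev] with n hk hd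
    have hD1 : (1:ℝ) ≤ Dd f n := by
      rw [Dd]
      exact_mod_cast Nat.one_le_iff_ne_zero.mpr (by omega)
    have hD0 : (0:ℝ) ≤ Dd f n := le_trans zero_le_one hD1
    -- coefficients via esymm
    have hc1' : (f n).coeff ((f n).natDegree - 1) = -(Pj f 1 n) := by
      rw [hco n 1 (by omega), he1 n, pow_one, neg_one_mul]
    have hc2' : (f n).coeff ((f n).natDegree - (2*r+1)) = -(Ee f (2*r+1) n) := by
      rw [hco n (2*r+1) hd]
      have : (-1:ℝ)^(2*r+1) = -1 := Odd.neg_one_pow ⟨r, by ring⟩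
      rw [this, neg_one_mul]
    have hδp : δ ≤ |Pj f 1 n| := by
      have := hc1 n
      rwa [hc1', abs_neg] at this
    -- sign computation
    rw [hc1', hc2']
    have hgoal : (-1:ℝ)^r * -Pj f 1 n * -Ee f (2*r+1) n
        = (-1:ℝ)^r * Pj f 1 n * Ee f (2*r+1) n := by ring
    rw [hgoal]
    -- decompose
    have hee : (-1:ℝ)^r * (-1:ℝ)^r = 1 := by
      rw [← pow_add]
      exact Even.neg_one_pow ⟨r, rfl⟩
    have hdecomp : (-1:ℝ)^r * Pj f 1 n * Ee f (2*r+1) n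
        = (Pj f 1 n)^2 * (Pj f 2 n)^r / F
          + (-1:ℝ)^r * Pj f 1 n * (Ee f (2*r+1) n - Gg f (2*r+1) n) := by
      have h2 : (-1:ℝ)^r * Pj f 1 n * Gg f (2*r+1) n
          = (Pj f 1 n)^2 * (Pj f 2 n)^r / F := by
        rw [hGeq n]
        have : (-1:ℝ)^r * Pj f 1 n * ((-1:ℝ)^r * Pj f 1 n * (Pj f 2 n)^r / F)
            = ((-1:ℝ)^r * (-1:ℝ)^r) * ((Pj f 1 n)^2 * (Pj f 2 n)^r / F) := by ring
        rw [this, hee, one_mul]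
      calc (-1:ℝ)^r * Pj f 1 n * Ee f (2*r+1) n
          = (-1:ℝ)^r * Pj f 1 n * Gg f (2*r+1) n
            + (-1:ℝ)^r * Pj f 1 n * (Ee f (2*r+1) n - Gg f (2*r+1) n) := by ring
        _ = _ := by rw [h2]
    rw [hdecomp]
    -- bound the error term
    have herr : |(-1:ℝ)^r * Pj f 1 n * (Ee f (2*r+1) n - Gg f (2*r+1) n)|
        ≤ εs * (1 + 1/δ) * ((Pj f 1 n)^2 * (Dd f n)^r) := by
      rw [abs_mul, abs_mul, abs_pow, abs_neg, abs_one, one_pow, one_mul]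
      rw [hWeq n] at hk
      have hstep : |Pj f 1 n| * |Ee f (2*r+1) n - Gg f (2*r+1) n|
          ≤ |Pj f 1 n| * (εs * ((|Pj f 1 n| + 1) * (Dd f n)^r)) :=
        mul_le_mul_of_nonneg_left hk (abs_nonneg _)
      refine le_trans hstep ?_
      have hp1le : |Pj f 1 n| ≤ (Pj f 1 n)^2 / δ := by
        rw [le_div_iff₀ hδ]
        calc |Pj f 1 n| * δ ≤ |Pj f 1 n| * |Pj f 1 n| :=
              mul_le_mul_of_nonneg_left hδp (abs_nonneg _)
          _ = (Pj f 1 n)^2 := by rw [← sq_abs]; ring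
      have hDr : (0:ℝ) ≤ (Dd f n)^r := pow_nonneg hD0 _
      have hexp : |Pj f 1 n| * (|Pj f 1 n| + 1)
          ≤ (Pj f 1 n)^2 * (1 + 1/δ) := by
        have h1 : |Pj f 1 n| * |Pj f 1 n| = (Pj f 1 n)^2 := by rw [← sq_abs]; ring
        have h2 : (Pj f 1 n)^2 * (1 + 1/δ) = (Pj f 1 n)^2 + (Pj f 1 n)^2 / δ := by
          ring
        rw [mul_add, mul_one, h1, h2]
        linarith
      calc |Pj f 1 n| * (εs * ((|Pj f 1 n| + 1) * (Dd f n)^r))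
          = εs * ((|Pj f 1 n| * (|Pj f 1 n| + 1)) * (Dd f n)^r) := by ring
        _ ≤ εs * (((Pj f 1 n)^2 * (1 + 1/δ)) * (Dd f n)^r) := by
            apply mul_le_mul_of_nonneg_left _ (le_of_lt hεs0)
            exact mul_le_mul_of_nonneg_right hexp hDr
        _ = εs * (1 + 1/δ) * ((Pj f 1 n)^2 * (Dd f n)^r) := by ring
    have hcan : εs * (1 + 1/δ) = (α₀^2)^r / (2*F) := by
      rw [hεsdef]
      field_simp
    rw [hcan] at herr
    -- lower bound for the main term
    have hq0' : (0:ℝ) ≤ α₀^2 * Dd f n := by positivity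
    have hqr : (α₀^2)^r * (Dd f n)^r ≤ (Pj f 2 n)^r := by
      rw [← mul_pow]
      exact pow_le_pow_left₀ hq0' (hp2 n) r
    have hp1sq : δ^2 ≤ (Pj f 1 n)^2 := by
      rw [← sq_abs (Pj f 1 n)]
      exact pow_le_pow_left₀ (le_of_lt hδ) hδp 2
    have hp1sq0 : (0:ℝ) < (Pj f 1 n)^2 := lt_of_lt_of_le (by positivity) hp1sq
    have hmain : (Pj f 1 n)^2 * ((α₀^2)^r * (Dd f n)^r) / F
        ≤ (Pj f 1 n)^2 * (Pj f 2 n)^r / F := by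
      gcongr
    have hZ : (0:ℝ) < (α₀^2)^r / (2*F) * ((Pj f 1 n)^2 * (Dd f n)^r) := by
      apply mul_pos (by positivity)
      apply mul_pos hp1sq0
      exact lt_of_lt_of_le zero_lt_one (one_le_pow₀ hD1)
    have hrel : (Pj f 1 n)^2 * ((α₀^2)^r * (Dd f n)^r) / F
        = 2 * ((α₀^2)^r / (2*F) * ((Pj f 1 n)^2 * (Dd f n)^r)) := by
      field_simp
    have herr' : -((α₀^2)^r / (2*F) * ((Pj f 1 n)^2 * (Dd f n)^r))
        ≤ (-1:ℝ)^r * Pj f 1 n * (Ee f (2*r+1) n - Gg f (2*r+1) n) :=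
      neg_le_of_abs_le herr
    linarith [hmain, herr', hZ, hrel]
  rw [Filter.eventually_atTop] at hall
  obtain ⟨N, hN⟩ := hall
  exact ⟨N, hN⟩
end

section
/- Fix an integer r ≥ 0 and real numbers A > 0 and α₀ > 0. Let (f_n)_{n≥1} be a sequence of monic polynomials in ℝ[X] such that every root of every f_n is real and lies in the interval [−A, A], and write d_n = deg f_n. Assume d_n → ∞ as n → ∞, that p_2(f_n) ≥ α₀²·d_n for all n, and that the multiset of roots of each f_n is invariant under negation (equivalently, f_n(−x) = (−1)^{d_n} f_n(x)). Then c_{2r+1}(f_n) = 0 for every n with d_n ≥ 2r+1, and there exists N such that for all n ≥ N one has (−1)^r · c_{2r}(f_n) > 0; that is, the coefficients eventually follow the sign pattern +, 0, −, 0, +, 0, −, 0, …. -/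
open Polynomial Filter

/-!
Write `s` for the multiset of roots. Since `s = -s`, Vieta gives `e_k(s) = (-1)^k e_k(s)`, so the
odd-indexed coefficients vanish. Pairing each positive root `a` with `-a` writes
`f = X^z · g(X²)` with `g = ∏ (X - a²)`, hence `(-1)^r c_{2r}(f) = e_r(a²) > 0` as soon as there
are at least `r` positive roots. This eventually holds since
`α₀² d_n ≤ p₂(f_n) ≤ 2 A² · #{positive roots of f_n}` and `d_n → ∞`.
-/

namespace Multiset

variable {R : Type*}

theorem esymm_pos [CommSemiring R] [PartialOrder R] [IsStrictOrderedRing R] {s : Multiset R}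
    (hs : ∀ a ∈ s, 0 < a) {k : ℕ} (hk : k ≤ card s) : 0 < s.esymm k := by
  have hne : powersetCard k s ≠ ∅ := by
    rw [Ne, empty_eq_zero, ← card_eq_zero, card_powersetCard]
    exact (Nat.choose_pos hk).ne'
  rw [esymm]
  simpa using sum_lt_sum_of_nonempty (f := fun _ => (0 : R)) hne fun u hu =>
    prod_pos fun a ha => hs a (mem_of_le (mem_powersetCard.1 hu).1 ha)

theorem esymm_eq_zero_of_map_neg_eq [CommRing R] [IsDomain R] [CharZero R] {s : Multiset R}
    (hs : s.map Neg.neg = s) {k : ℕ} (hk : Odd k) : s.esymm k = 0 := by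
  have h := esymm_neg s k
  rw [hs, hk.neg_one_pow, neg_one_mul] at h
  exact self_eq_neg.1 h

theorem filter_pos_add_map_neg_add_replicate_zero [AddCommGroup R] [LinearOrder R]
    [IsOrderedAddMonoid R] {s : Multiset R} (hs : s.map Neg.neg = s) :
    s.filter (0 < ·) + (s.filter (0 < ·)).map Neg.neg + replicate (s.count 0) 0 = s := by
  have hneg : (s.filter (0 < ·)).map Neg.neg = s.filter (· < 0) := by
    conv_rhs => rw [← hs]
    rw [filter_map]
    exact congrArg _ (filter_congr fun a _ => by simp)
  have hdisj : s.filter (fun a => a < 0 ∧ a = 0) = 0 := filter_eq_nil.2 fun a _ h => h.1.ne h.2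
  rw [hneg, ← filter_eq', add_assoc, filter_add_filter, hdisj, add_zero]
  convert filter_add_not (0 < ·) s using 2
  exact filter_congr fun a _ => by rw [not_lt, le_iff_lt_or_eq]

theorem sum_map_sq_le_of_map_neg_eq [CommRing R] [LinearOrder R] [IsStrictOrderedRing R]
    {s : Multiset R} (hs : s.map Neg.neg = s) {B : R} (hB : ∀ a ∈ s, a ^ 2 ≤ B) :
    (s.map (· ^ 2)).sum ≤ 2 * card (s.filter (0 < ·)) * B := by
  have hsplit : (s.map (· ^ 2)).sum = 2 * ((s.filter (0 < ·)).map (· ^ 2)).sum := by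
    conv_lhs => rw [← filter_pos_add_map_neg_add_replicate_zero hs]
    simp only [map_add, sum_add, map_map, Function.comp_def, neg_sq, map_replicate, sum_replicate,
      zero_pow two_ne_zero, smul_zero, add_zero]
    ring
  have hbound : ((s.filter (0 < ·)).map (· ^ 2)).sum ≤ card (s.filter (0 < ·)) * B := by
    simpa using sum_le_card_nsmul ((s.filter (0 < ·)).map (· ^ 2)) B fun _ hb => by
      obtain ⟨a, ha, rfl⟩ := mem_map.1 hb
      exact hB a (mem_filter.1 ha).1
  rw [hsplit, mul_assoc]
  gcongr

theorem prod_X_sub_C_add_map_neg [CommRing R] (t : Multiset R) :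
    ((t + t.map Neg.neg).map (fun a => X - C a)).prod =
      expand R 2 (((t.map (· ^ 2)).map fun a => X - C a).prod) := by
  induction t using Multiset.induction_on with
  | empty => simp
  | cons a t ih =>
    simp only [map_cons, cons_add, add_cons, prod_cons, ih, map_mul, map_sub, map_neg, map_pow,
      expand_X, expand_C]
    ring

theorem prod_X_sub_C_of_map_neg_eq [CommRing R] [LinearOrder R] [IsStrictOrderedRing R]
    {s : Multiset R} (hs : s.map Neg.neg = s) :
    (s.map fun a => X - C a).prod =
      X ^ s.count 0 *
        expand R 2 ((((s.filter (0 < ·)).map (· ^ 2)).map fun a => X - C a).prod) := by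
  conv_lhs => rw [← filter_pos_add_map_neg_add_replicate_zero hs]
  rw [map_add, prod_add, prod_X_sub_C_add_map_neg, map_replicate, prod_replicate, C_0, sub_zero,
    mul_comm]

end Multiset

namespace Polynomial

variable {R : Type*}

theorem coeff_natDegree_sub_eq_zero_of_map_neg_eq [CommRing R] [IsDomain R] [CharZero R]
    {p : R[X]} (hcard : p.roots.card = p.natDegree) (hsym : p.roots.map Neg.neg = p.roots)
    {k : ℕ} (hk : k ≤ p.natDegree) (hodd : Odd k) : p.coeff (p.natDegree - k) = 0 := by
  rw [coeff_eq_esymm_roots_of_card hcard (Nat.sub_le _ _), Nat.sub_sub_self hk,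
    Multiset.esymm_eq_zero_of_map_neg_eq hsym hodd, mul_zero]

theorem neg_one_pow_mul_coeff_natDegree_sub_two_mul_pos [CommRing R] [LinearOrder R]
    [IsStrictOrderedRing R] {p : R[X]} (hp : p.Monic) (hcard : p.roots.card = p.natDegree)
    (hsym : p.roots.map Neg.neg = p.roots) {r : ℕ} (hr : r ≤ (p.roots.filter (0 < ·)).card) :
    0 < (-1) ^ r * p.coeff (p.natDegree - 2 * r) := by
  have hfactor := Multiset.prod_X_sub_C_of_map_neg_eq hsym
  rw [prod_multiset_X_sub_C_of_monic_of_roots_card_eq hp hcard] at hfactor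
  set t := p.roots.filter (0 < ·)
  set z := p.roots.count 0
  have hdeg : p.natDegree = 2 * t.card + z := by
    rw [← hcard]
    conv_lhs => rw [← Multiset.filter_pos_add_map_neg_add_replicate_zero hsym]
    simp only [Multiset.card_add, Multiset.card_map, Multiset.card_replicate]
    ring
  have hle : t.card - r ≤ (t.map (· ^ 2)).card := by simp
  rw [hdeg, show 2 * t.card + z - 2 * r = 2 * (t.card - r) + z by omega,
    hfactor, coeff_X_pow_mul, coeff_expand_mul' two_pos, Multiset.prod_X_sub_C_coeff _ hle,
    Multiset.card_map, Nat.sub_sub_self hr, ← mul_assoc, ← pow_add, ← two_mul, pow_mul,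
    neg_one_sq, one_pow, one_mul]
  refine Multiset.esymm_pos (fun b hb => ?_) (by simpa using hr)
  obtain ⟨a, ha, rfl⟩ := Multiset.mem_map.1 hb
  exact pow_pos (Multiset.of_mem_filter ha) 2

end Polynomial

/-- If the roots of each `fₙ` lie in `[-A, A]`, are symmetric about the origin
(the multiset of roots is invariant under negation), `dₙ → ∞`, and
`p₂(fₙ) ≥ α₀² dₙ`, then every odd-indexed coefficient `c_{2r+1}(fₙ)` vanishes
(whenever `dₙ ≥ 2r+1`), and `c_{2r}(fₙ)` eventually has sign `(-1)^r`:
the coefficients eventually follow the sign pattern `+, 0, -, 0, +, 0, -, 0, …`. -/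
theorem coeff_sign_pattern_symmetric (r : ℕ) (A α₀ : ℝ) (hA : 0 < A) (hα : 0 < α₀)
    (f : ℕ → Polynomial ℝ)
    (hmonic : ∀ n, (f n).Monic)
    (hsplit : ∀ n, Multiset.card (f n).roots = (f n).natDegree)
    (hroots : ∀ n, ∀ x ∈ (f n).roots, x ∈ Set.Icc (-A) A)
    (hdeg : Tendsto (fun n => (f n).natDegree) atTop atTop)
    (hp2 : ∀ n, α₀ ^ 2 * ((f n).natDegree : ℝ) ≤ ((f n).roots.map (fun x => x ^ 2)).sum)
    (hsym : ∀ n, (f n).roots.map (fun x => -x) = (f n).roots) :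
    (∀ n, 2 * r + 1 ≤ (f n).natDegree →
        (f n).coeff ((f n).natDegree - (2 * r + 1)) = 0) ∧
      ∃ N : ℕ, ∀ n ≥ N, 0 < (-1 : ℝ) ^ r * (f n).coeff ((f n).natDegree - 2 * r) := by
  refine ⟨fun n hn => coeff_natDegree_sub_eq_zero_of_map_neg_eq (hsplit n) (hsym n) hn
    (odd_two_mul_add_one r), ?_⟩
  obtain ⟨N, hN⟩ := eventually_atTop.1 (hdeg.eventually_ge_atTop ⌈2 * r * A ^ 2 / α₀ ^ 2⌉₊)
  refine ⟨N, fun n hn =>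
    neg_one_pow_mul_coeff_natDegree_sub_two_mul_pos (hmonic n) (hsplit n) (hsym n) ?_⟩
  have hcount : α₀ ^ 2 * (f n).natDegree ≤ 2 * ((f n).roots.filter (0 < ·)).card * A ^ 2 :=
    (hp2 n).trans <| Multiset.sum_map_sq_le_of_map_neg_eq (hsym n) fun a ha =>
      sq_le_sq' (hroots n a ha).1 (hroots n a ha).2
  have hlarge : 2 * r * A ^ 2 ≤ (f n).natDegree * α₀ ^ 2 :=
    (div_le_iff₀ (by positivity)).1 (Nat.ceil_le.1 (hN n hn))
  have hA2 : 0 < A ^ 2 := by positivity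
  exact_mod_cast (show (r : ℝ) ≤ ((f n).roots.filter (0 < ·)).card by nlinarith)
end
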